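/- Let f(ε) = min_x max_{Q : W(P̂,Q) ≤ ε} E_Q[c(x, δ)] be the optimal value of a Wasserstein DRO problem as a function of the radius ε ≥ 0. Then f is nondecreasing and concave in ε. -/

import Mathlib

open MeasureTheory
open scoped ENNReal

noncomputable def W1 {Ξ : Type*} [MeasurableSpace Ξ] [EMetricSpace Ξ]
    (P Q : Measure Ξ) : ℝ≥0∞ :=
  ⨅ μ ∈ {μ : Measure (Ξ × Ξ) | μ.map Prod.fst = P ∧ μ.map Prod.snd = Q},
    ∫⁻ x, edist x.1 x.2 ∂μ

/-!
For a fixed decision `x`, the worst-case expectation `sup {E_Q[c x] : W1(P̂, Q) ≤ ε}` is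
nondecreasing in `ε` because the balls are nested, and concave because a mixture
`a Q₁ + b Q₂` of `Q₁ ∈ B(ε₁)`, `Q₂ ∈ B(ε₂)` lies in `B(a ε₁ + b ε₂)` (mix near-optimal couplings)
while `Q ↦ E_Q[c x]` is affine. Since `|c| ≤ M`, these functions are bounded below by `-M`, so
their pointwise infimum `f` inherits both properties.
-/

open Set
open scoped Pointwise

section InfimumOfFamily

variable {ι : Sort*}

theorem MonotoneOn.ciInf {α : Type*} [Preorder α] {s : Set α} {g : ι → α → ℝ}
    (hg : ∀ i, MonotoneOn (g i) s)
    (hbdd : ∀ x ∈ s, BddBelow (range fun i => g i x)) :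
    MonotoneOn (fun x => ⨅ i, g i x) s :=
  fun x hx _ hy hxy => ciInf_mono (hbdd x hx) fun i => hg i hx hy hxy

theorem ConcaveOn.ciInf [Nonempty ι] {E : Type*} [AddCommGroup E] [Module ℝ E] {s : Set E}
    {g : ι → E → ℝ} (hg : ∀ i, ConcaveOn ℝ s (g i))
    (hbdd : ∀ x ∈ s, BddBelow (range fun i => g i x)) :
    ConcaveOn ℝ s fun x => ⨅ i, g i x := by
  refine ⟨(hg (Classical.arbitrary ι)).1, fun x hx y hy a b ha hb hab => le_ciInf fun i => ?_⟩
  dsimp only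
  calc a • (⨅ i, g i x) + b • ⨅ i, g i y ≤ a • g i x + b • g i y := by
        gcongr
        exacts [ciInf_le (hbdd x hx) i, ciInf_le (hbdd y hy) i]
    _ ≤ g i (a • x + b • y) := (hg i).2 hx hy ha hb hab

end InfimumOfFamily

section Integral

variable {Ξ : Type*} [MeasurableSpace Ξ] {g : Ξ → ℝ} {M : ℝ}

theorem integral_smul_add_measure_ofReal {Q₁ Q₂ : Measure Ξ} {a b : ℝ} (ha : 0 ≤ a) (hb : 0 ≤ b)
    (h₁ : Integrable g Q₁) (h₂ : Integrable g Q₂) :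
    ∫ ξ, g ξ ∂(ENNReal.ofReal a • Q₁ + ENNReal.ofReal b • Q₂) =
      a * ∫ ξ, g ξ ∂Q₁ + b * ∫ ξ, g ξ ∂Q₂ := by
  rw [integral_add_measure (h₁.smul_measure ENNReal.ofReal_ne_top)
      (h₂.smul_measure ENNReal.ofReal_ne_top),
    integral_smul_measure, integral_smul_measure, ENNReal.toReal_ofReal ha,
    ENNReal.toReal_ofReal hb, smul_eq_mul, smul_eq_mul]

theorem abs_integral_le_of_abs_le (hbdd : ∀ ξ, |g ξ| ≤ M) (Q : Measure Ξ)
    [IsProbabilityMeasure Q] : |∫ ξ, g ξ ∂Q| ≤ M := by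
  simpa using norm_integral_le_of_norm_le_const (μ := Q)
    (ae_of_all _ fun ξ => (Real.norm_eq_abs _).trans_le (hbdd ξ))

end Integral

section Wasserstein

variable {Ξ : Type*} [MeasurableSpace Ξ] [EMetricSpace Ξ]

theorem W1_le_lintegral {P Q : Measure Ξ} {μ : Measure (Ξ × Ξ)}
    (h₁ : μ.map Prod.fst = P) (h₂ : μ.map Prod.snd = Q) :
    W1 P Q ≤ ∫⁻ x, edist x.1 x.2 ∂μ :=
  iInf₂_le μ ⟨h₁, h₂⟩

theorem exists_coupling_lintegral_lt {P Q : Measure Ξ} {r : ℝ≥0∞} (h : W1 P Q < r) :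
    ∃ μ : Measure (Ξ × Ξ), μ.map Prod.fst = P ∧ μ.map Prod.snd = Q ∧
      ∫⁻ x, edist x.1 x.2 ∂μ < r := by
  obtain ⟨μ, hμ⟩ := iInf_lt_iff.mp h
  obtain ⟨⟨h₁, h₂⟩, hlt⟩ := iInf_lt_iff.mp hμ
  exact ⟨μ, h₁, h₂, hlt⟩

theorem W1_self (P : Measure Ξ) : W1 P P = 0 := by
  have hdiag : Measurable fun x : Ξ => (x, x) := measurable_id.prodMk measurable_id
  refine nonpos_iff_eq_zero.mp ?_
  calc W1 P P ≤ ∫⁻ x, edist x.1 x.2 ∂(P.map fun x => (x, x)) :=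
        W1_le_lintegral
          (by rw [Measure.map_map measurable_fst hdiag]; exact Measure.map_id)
          (by rw [Measure.map_map measurable_snd hdiag]; exact Measure.map_id)
    _ ≤ ∫⁻ x, edist x x ∂P := lintegral_map_le _ _
    _ = 0 := by simp

theorem W1_smul_add_le (P : Measure Ξ) {Q₁ Q₂ : Measure Ξ} {a b : ℝ≥0∞} (hab : a + b = 1)
    (h₁ : W1 P Q₁ ≠ ⊤) (h₂ : W1 P Q₂ ≠ ⊤) :
    W1 P (a • Q₁ + b • Q₂) ≤ a * W1 P Q₁ + b * W1 P Q₂ := by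
  refine ENNReal.le_of_forall_pos_le_add fun δ hδ _ => ?_
  have hδ₀ : (δ : ℝ≥0∞) ≠ 0 := by simpa using hδ.ne'
  obtain ⟨μ₁, hμ₁P, hμ₁Q, hμ₁⟩ := exists_coupling_lintegral_lt (ENNReal.lt_add_right h₁ hδ₀)
  obtain ⟨μ₂, hμ₂P, hμ₂Q, hμ₂⟩ := exists_coupling_lintegral_lt (ENNReal.lt_add_right h₂ hδ₀)
  have hP : (a • μ₁ + b • μ₂).map Prod.fst = P := by
    rw [Measure.map_add _ _ measurable_fst, Measure.map_smul, Measure.map_smul,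
      hμ₁P, hμ₂P, ← add_smul, hab, one_smul]
  have hQ : (a • μ₁ + b • μ₂).map Prod.snd = a • Q₁ + b • Q₂ := by
    rw [Measure.map_add _ _ measurable_snd, Measure.map_smul, Measure.map_smul, hμ₁Q, hμ₂Q]
  calc W1 P (a • Q₁ + b • Q₂) ≤ ∫⁻ x, edist x.1 x.2 ∂(a • μ₁ + b • μ₂) := W1_le_lintegral hP hQ
    _ = a * ∫⁻ x, edist x.1 x.2 ∂μ₁ + b * ∫⁻ x, edist x.1 x.2 ∂μ₂ := by
        rw [lintegral_add_measure, lintegral_smul_measure, lintegral_smul_measure,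
          smul_eq_mul, smul_eq_mul]
    _ ≤ a * (W1 P Q₁ + δ) + b * (W1 P Q₂ + δ) := by gcongr
    _ = a * W1 P Q₁ + b * W1 P Q₂ + δ := by
        rw [mul_add, mul_add, add_add_add_comm, ← add_mul, hab, one_mul]

def wassersteinBall (P : Measure Ξ) (ε : ℝ) : Set (Measure Ξ) :=
  {Q | IsProbabilityMeasure Q ∧ W1 P Q ≤ ENNReal.ofReal ε}

theorem wassersteinBall_mono (P : Measure Ξ) {ε ε' : ℝ} (h : ε ≤ ε') :
    wassersteinBall P ε ⊆ wassersteinBall P ε' :=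
  fun _ ⟨hQ, hW⟩ => ⟨hQ, hW.trans (ENNReal.ofReal_le_ofReal h)⟩

theorem self_mem_wassersteinBall (P : Measure Ξ) [IsProbabilityMeasure P] (ε : ℝ) :
    P ∈ wassersteinBall P ε :=
  ⟨inferInstance, by simp [W1_self]⟩

theorem smul_add_mem_wassersteinBall {P Q₁ Q₂ : Measure Ξ} {ε₁ ε₂ a b : ℝ}
    (hQ₁ : Q₁ ∈ wassersteinBall P ε₁) (hQ₂ : Q₂ ∈ wassersteinBall P ε₂)
    (hε₁ : 0 ≤ ε₁) (hε₂ : 0 ≤ ε₂) (ha : 0 ≤ a) (hb : 0 ≤ b) (hab : a + b = 1) :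
    ENNReal.ofReal a • Q₁ + ENNReal.ofReal b • Q₂ ∈ wassersteinBall P (a * ε₁ + b * ε₂) := by
  obtain ⟨hQ₁, hW₁⟩ := hQ₁
  obtain ⟨hQ₂, hW₂⟩ := hQ₂
  have habE : ENNReal.ofReal a + ENNReal.ofReal b = 1 := by
    rw [← ENNReal.ofReal_add ha hb, hab, ENNReal.ofReal_one]
  refine ⟨⟨by simp [habE]⟩, ?_⟩
  calc W1 P (ENNReal.ofReal a • Q₁ + ENNReal.ofReal b • Q₂)
      ≤ ENNReal.ofReal a * W1 P Q₁ + ENNReal.ofReal b * W1 P Q₂ :=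
        W1_smul_add_le P habE (ne_top_of_le_ne_top ENNReal.ofReal_ne_top hW₁)
          (ne_top_of_le_ne_top ENNReal.ofReal_ne_top hW₂)
    _ ≤ ENNReal.ofReal a * ENNReal.ofReal ε₁ + ENNReal.ofReal b * ENNReal.ofReal ε₂ := by
        gcongr
    _ = ENNReal.ofReal (a * ε₁ + b * ε₂) := by
        rw [← ENNReal.ofReal_mul ha, ← ENNReal.ofReal_mul hb,
          ENNReal.ofReal_add (mul_nonneg ha hε₁) (mul_nonneg hb hε₂)]

noncomputable def worstCaseExpectation (P : Measure Ξ) (ε : ℝ) (g : Ξ → ℝ) : ℝ :=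
  sSup ((fun Q => ∫ ξ, g ξ ∂Q) '' wassersteinBall P ε)

variable {g : Ξ → ℝ} {M : ℝ}

theorem bddAbove_integral_image_wassersteinBall (hbdd : ∀ ξ, |g ξ| ≤ M) (P : Measure Ξ)
    (ε : ℝ) : BddAbove ((fun Q => ∫ ξ, g ξ ∂Q) '' wassersteinBall P ε) := by
  refine ⟨M, ?_⟩
  rintro _ ⟨Q, ⟨hQ, -⟩, rfl⟩
  exact (abs_le.mp (abs_integral_le_of_abs_le hbdd Q)).2

variable (P : Measure Ξ) [IsProbabilityMeasure P]

theorem neg_le_worstCaseExpectation (hbdd : ∀ ξ, |g ξ| ≤ M) (ε : ℝ) :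
    -M ≤ worstCaseExpectation P ε g :=
  (abs_le.mp (abs_integral_le_of_abs_le hbdd P)).1.trans <|
    le_csSup (bddAbove_integral_image_wassersteinBall hbdd P ε)
      (mem_image_of_mem _ (self_mem_wassersteinBall P ε))

theorem monotone_worstCaseExpectation (hbdd : ∀ ξ, |g ξ| ≤ M) :
    Monotone fun ε => worstCaseExpectation P ε g :=
  fun _ _ h => csSup_le_csSup (bddAbove_integral_image_wassersteinBall hbdd P _)
    ((nonempty_of_mem (self_mem_wassersteinBall P _)).image _)
    (image_mono (wassersteinBall_mono P h))

theorem concaveOn_worstCaseExpectation (hg : Measurable g) (hbdd : ∀ ξ, |g ξ| ≤ M) :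
    ConcaveOn ℝ (Ici 0) fun ε => worstCaseExpectation P ε g := by
  set T := fun ε => (fun Q => ∫ ξ, g ξ ∂Q) '' wassersteinBall P ε
  have hT : ∀ ε, (T ε).Nonempty ∧ BddAbove (T ε) := fun ε =>
    ⟨(nonempty_of_mem (self_mem_wassersteinBall P ε)).image _,
      bddAbove_integral_image_wassersteinBall hbdd P ε⟩
  have hint : ∀ Q : Measure Ξ, IsProbabilityMeasure Q → Integrable g Q := fun Q _ =>
    .of_bound hg.aestronglyMeasurable M
      (ae_of_all _ fun ξ => (Real.norm_eq_abs _).trans_le (hbdd ξ))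
  refine ⟨convex_Ici 0, fun ε₁ hε₁ ε₂ hε₂ a b ha hb hab => ?_⟩
  have hsub : a • T ε₁ + b • T ε₂ ⊆ T (a • ε₁ + b • ε₂) := by
    rintro _ ⟨_, ⟨_, ⟨Q₁, hQ₁, rfl⟩, rfl⟩, _, ⟨_, ⟨Q₂, hQ₂, rfl⟩, rfl⟩, rfl⟩
    exact ⟨_, smul_add_mem_wassersteinBall hQ₁ hQ₂ hε₁ hε₂ ha hb hab,
      integral_smul_add_measure_ofReal ha hb (hint Q₁ hQ₁.1) (hint Q₂ hQ₂.1)⟩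
  calc a • sSup (T ε₁) + b • sSup (T ε₂) = sSup (a • T ε₁ + b • T ε₂) := by
        rw [csSup_add ((hT ε₁).1.smul_set) ((hT ε₁).2.smul_of_nonneg ha) ((hT ε₂).1.smul_set)
          ((hT ε₂).2.smul_of_nonneg hb), Real.sSup_smul_of_nonneg ha, Real.sSup_smul_of_nonneg hb]
    _ ≤ sSup (T (a • ε₁ + b • ε₂)) := csSup_le_csSup (hT _).2 ((hT ε₁).1.smul_set.add
          (hT ε₂).1.smul_set) hsub

end Wasserstein

/-- the optimal value `f(ε) = inf_x sup_{Q : W(P̂,Q) ≤ ε} E_Q[c(x,δ)]` of a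
Wasserstein DRO problem is nondecreasing and concave as a function of the radius `ε ≥ 0`. -/
theorem stmt9 {X Ξ : Type*} [Nonempty X] [MeasurableSpace Ξ] [EMetricSpace Ξ]
    (c : X → Ξ → ℝ) (hmeas : ∀ x, Measurable (c x))
    (M : ℝ) (hbdd : ∀ x ξ, |c x ξ| ≤ M)
    (Phat : Measure Ξ) [IsProbabilityMeasure Phat] :
    let f : ℝ → ℝ := fun ε =>
      sInf {v : ℝ | ∃ x : X, v = sSup {e : ℝ | ∃ Q : Measure Ξ,
        IsProbabilityMeasure Q ∧ W1 Phat Q ≤ ENNReal.ofReal ε ∧ e = ∫ ξ, c x ξ ∂Q}}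
    MonotoneOn f (Set.Ici 0) ∧ ConcaveOn ℝ (Set.Ici 0) f := by
  intro f
  have hf : f = fun ε => ⨅ x, worstCaseExpectation Phat ε (c x) := by
    funext ε
    simp only [f, iInf, worstCaseExpectation, wassersteinBall, range, image, mem_ofPred_eq,
      and_assoc, eq_comm]
  have hbddBelow : ∀ ε ∈ Ici (0 : ℝ),
      BddBelow (range fun x => worstCaseExpectation Phat ε (c x)) :=
    fun ε _ => ⟨-M, forall_mem_range.mpr fun x => neg_le_worstCaseExpectation Phat (hbdd x) ε⟩
  rw [hf]
  exact ⟨.ciInf (fun x => (monotone_worstCaseExpectation Phat (hbdd x)).monotoneOn _) hbddBelow,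
    .ciInf (fun x => concaveOn_worstCaseExpectation Phat (hmeas x) (hbdd x)) hbddBelow⟩
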